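/- The map ρ₂ : (c₁,…,c_p) ↦ (c₁−1,…,c_p−1) is a graph automorphism of Λ_{(p,q)}, and the automorphisms ρ₁, ρ₂ of Λ_{(p,q)} satisfy ρ₁ρ₂ = ρ₂ρ₁ and ρ₁^p = ρ₂^q. -/

import Mathlib

/-- The vertex set `Λ⁰_{(p,q)} = {(c₁,…,c_p) ∈ ℤ^p : c₁ ≤ ⋯ ≤ c_p ≤ c₁ + q}`
(written index-free: monotone and any two entries differ by at most `q`). -/
def Lam0 (p q : ℕ) : Set (Fin p → ℤ) :=
  {c | (∀ i j : Fin p, i ≤ j → c i ≤ c j) ∧ ∀ i j : Fin p, c i ≤ c j + q}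

/-- The graph `Λ_{(p,q)}`: vertices `Λ⁰_{(p,q)}`, edges between tuples at ℓ¹-distance 1. -/
def LamGraph (p q : ℕ) : SimpleGraph (Lam0 p q) where
  Adj u v := ∑ i, ((u : Fin p → ℤ) i - (v : Fin p → ℤ) i).natAbs = 1
  symm := by
    constructor
    intro u v h
    have e : ∀ i, ((v : Fin p → ℤ) i - (u : Fin p → ℤ) i).natAbs
        = ((u : Fin p → ℤ) i - (v : Fin p → ℤ) i).natAbs := fun i => by rw [← Int.natAbs_neg, neg_sub]
    simpa [e] using h
  loopless := by constructor; intro u h; simp at h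

/-- The map `ρ₁ : (c₁,…,c_p) ↦ (c_p − q, c₁, …, c_{p−1})`. -/
def rho1 (q : ℕ) {p : ℕ} (c : Fin p → ℤ) : Fin p → ℤ := fun i =>
  if h : (i : ℕ) = 0 then
    c ⟨p - 1, Nat.sub_lt i.pos one_pos⟩ - q
  else
    c ⟨(i : ℕ) - 1, Nat.lt_of_le_of_lt (Nat.sub_le _ _) i.isLt⟩

/-- The map `ρ₂ : (c₁,…,c_p) ↦ (c₁−1,…,c_p−1)`. -/
def rho2 {p : ℕ} (c : Fin p → ℤ) : Fin p → ℤ := fun i => c i - 1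

lemma sub_const_mem_Lam0_iff {p q : ℕ} (c : Fin p → ℤ) (a : ℤ) :
    (fun i => c i - a) ∈ Lam0 p q ↔ c ∈ Lam0 p q := by
  simp only [Lam0, Set.mem_ofPred_eq, sub_le_sub_iff_right, sub_add_eq_add_sub]

lemma rho2_bijOn_Lam0 (p q : ℕ) : Set.BijOn (rho2 (p := p)) (Lam0 p q) (Lam0 p q) :=
  (Equiv.subRight (1 : Fin p → ℤ)).bijOn fun c => sub_const_mem_Lam0_iff c 1

lemma rho2_sub_rho2 {p : ℕ} (u v : Fin p → ℤ) (i : Fin p) :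
    rho2 u i - rho2 v i = u i - v i := by
  simp only [rho2, sub_sub_sub_cancel_right]

lemma rho1_rho2_comm (q : ℕ) {p : ℕ} (c : Fin p → ℤ) : rho1 q (rho2 c) = rho2 (rho1 q c) := by
  funext i
  simp only [rho1, rho2]
  split_ifs <;> ring

lemma rho2_iterate_apply {p : ℕ} (k : ℕ) (c : Fin p → ℤ) (i : Fin p) :
    (rho2 (p := p))^[k] c i = c i - k := by
  induction k generalizing c with
  | zero => simp
  | succ n ih =>
    rw [Function.iterate_succ_apply, ih, rho2]
    push_cast
    ring

lemma rho1_iterate_apply {p q : ℕ} (k : ℕ) (hk : k ≤ p) (c : Fin p → ℤ) (i : Fin p) :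
    (rho1 q)^[k] c i =
      if h : (i : ℕ) < k then c ⟨(i : ℕ) + p - k, by omega⟩ - q
      else c ⟨(i : ℕ) - k, by omega⟩ := by
  induction k generalizing i with
  | zero => simp
  | succ n ih =>
    have hi := i.isLt
    rw [Function.iterate_succ_apply', rho1]
    by_cases h0 : (i : ℕ) = 0
    · rw [dif_pos h0, ih (by omega)]
      dsimp only
      rw [dif_neg (by omega), dif_pos (by omega)]
      congr 3
      omega
    · rw [dif_neg h0, ih (by omega)]
      dsimp only
      by_cases h1 : (i : ℕ) - 1 < n
      · rw [dif_pos h1, dif_pos (by omega)]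
        congr 3
        omega
      · rw [dif_neg h1, dif_neg (by omega)]
        congr 2
        omega

lemma rho1_iterate_self_eq_rho2_iterate (q : ℕ) {p : ℕ} (c : Fin p → ℤ) :
    (rho1 q)^[p] c = (rho2 (p := p))^[q] c := by
  funext i
  rw [rho2_iterate_apply, rho1_iterate_apply p le_rfl, dif_pos i.isLt]
  simp only [Nat.add_sub_cancel, Fin.eta]

theorem rho2_automorphism_and_relations_general (p q : ℕ) :
    Set.BijOn (rho2 (p := p)) (Lam0 p q) (Lam0 p q) ∧
    (∀ u ∈ Lam0 p q, ∀ v ∈ Lam0 p q,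
      ((∑ i, (u i - v i).natAbs = 1) ↔ (∑ i, (rho2 u i - rho2 v i).natAbs = 1))) ∧
    (∀ c : Fin p → ℤ, rho1 q (rho2 c) = rho2 (rho1 q c)) ∧
    (∀ c : Fin p → ℤ, (rho1 q)^[p] c = (rho2 (p := p))^[q] c) :=
  ⟨rho2_bijOn_Lam0 p q,
    fun u _ v _ => by simp only [rho2_sub_rho2],
    rho1_rho2_comm q,
    rho1_iterate_self_eq_rho2_iterate q⟩

/-- `ρ₂` is a graph automorphism of `Λ_{(p,q)}`, and the automorphisms
`ρ₁, ρ₂` satisfy `ρ₁ρ₂ = ρ₂ρ₁` and `ρ₁^p = ρ₂^q`. -/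
theorem rho2_automorphism_and_relations (p q : ℕ) (hp : 1 ≤ p) (hq : 1 ≤ q) :
    Set.BijOn (rho2 (p := p)) (Lam0 p q) (Lam0 p q) ∧
    (∀ u ∈ Lam0 p q, ∀ v ∈ Lam0 p q,
      ((∑ i, (u i - v i).natAbs = 1) ↔ (∑ i, (rho2 u i - rho2 v i).natAbs = 1))) ∧
    (∀ c : Fin p → ℤ, rho1 q (rho2 c) = rho2 (rho1 q c)) ∧
    (∀ c : Fin p → ℤ, (rho1 q)^[p] c = (rho2 (p := p))^[q] c) :=
  rho2_automorphism_and_relations_general p q
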